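/- arXiv:2601.01396 — 3 statements merged into one kernel-verified Lean document; each statement's English description precedes it below -/
import Mathlib

section
/- Let A be a finitely generated ℂ-algebra and J ⊊ A a proper ideal. Then √J = ⋂ m, where the intersection runs over all maximal ideals m of A containing J. -/
theorem radical_eq_sInf_maximal_of_finiteType_general {A : Type*} [CommRing A]
    [Algebra ℂ A] [Algebra.FiniteType ℂ A]
    (J : Ideal A) :
    J.radical = sInf {m : Ideal A | J ≤ m ∧ m.IsMaximal} :=
  haveI : IsJacobsonRing A := isJacobsonRing_of_finiteType (A := ℂ)
  J.radical_eq_jacobson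

/-- For a finitely generated `ℂ`-algebra `A` and a proper ideal `J ⊊ A`,
the radical of `J` is the intersection of all maximal ideals containing `J`. -/
theorem radical_eq_sInf_maximal_of_finiteType {A : Type*} [CommRing A]
    [Algebra ℂ A] [Algebra.FiniteType ℂ A]
    (J : Ideal A) (hJ : J ≠ ⊤) :
    J.radical = sInf {m : Ideal A | J ≤ m ∧ m.IsMaximal} :=
  radical_eq_sInf_maximal_of_finiteType_general J
end

section
/- Let I be a prime ideal of ℂ[z₁,…,zₙ] with zero set X = V(I). Then the natural ring homomorphism Φ : ℂ[z₁,…,zₙ]/I → O_{ℂⁿ,o}/(I·O_{ℂⁿ,o}), sending f + I to f + I·O_{ℂⁿ,o}, is injective; that is, if a polynomial f lies in the ideal generated by I in the ring of germs of holomorphic functions at the origin o ∈ X, then f ∈ I. -/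
/-!
Taylor-expanding each analytic coefficient `h_k` to order `N` turns `f = ∑ h_k g_k` into a
polynomial identity `f = ∑ P_k g_k + q` with `q = O(‖x‖^N)` at the origin. Such a polynomial has
no monomials of degree `< N` (restrict it to lines through `0`), so `q ∈ 𝔪^N` for
`𝔪 = (z₁, …, zₙ)`. Thus `f ∈ I + 𝔪^N` for every `N`. Since the origin lies on `V(I)`, the image
of `𝔪` in the Noetherian domain `ℂ[z]/I` is proper, and Krull's intersection theorem gives
`f ∈ I`.
-/

open Filter Asymptotics Topology

namespace Polynomial

variable {𝕜 : Type*} [NontriviallyNormedField 𝕜]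

theorem eval_zero_eq_zero_of_isBigO_pow {p : 𝕜[X]} {N : ℕ}
    (hp : (fun t => p.eval t) =O[𝓝[≠] 0] fun t => ‖t‖ ^ (N + 1)) : p.eval 0 = 0 := by
  have hpow : Tendsto (fun t : 𝕜 => ‖t‖ ^ (N + 1)) (𝓝[≠] 0) (𝓝 0) :=
    tendsto_nhdsWithin_of_tendsto_nhds ((continuous_norm.pow _).tendsto' 0 0 (by simp))
  exact tendsto_nhds_unique ((p.continuous.tendsto 0).mono_left nhdsWithin_le_nhds)
    (hp.trans_tendsto hpow)

theorem X_pow_dvd_of_isBigO_pow {p : 𝕜[X]} {N : ℕ}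
    (hp : (fun t => p.eval t) =O[𝓝[≠] 0] fun t => ‖t‖ ^ N) : X ^ N ∣ p := by
  induction N generalizing p with
  | zero => exact one_dvd p
  | succ N ih =>
    obtain ⟨r, rfl⟩ : X ∣ p :=
      X_dvd_iff.2 (by rw [coeff_zero_eq_eval_zero]; exact eval_zero_eq_zero_of_isBigO_pow hp)
    have hr : (fun t => r.eval t) =O[𝓝[≠] 0] fun t => ‖t‖ ^ N := by
      -- off the origin, `r t = p.eval t * t⁻¹`
      refine (hp.mul (isBigO_refl (fun t : 𝕜 => t⁻¹) _).norm_right).congr' ?_ ?_ <;>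
        filter_upwards [self_mem_nhdsWithin] with t (ht : t ≠ 0)
      · simp [mul_comm t, ht]
      · simp [pow_succ, ht]
    rw [pow_succ']
    exact mul_dvd_mul_left X (ih hr)

end Polynomial

namespace MvPolynomial

variable {σ R : Type*} [CommSemiring R]

theorem IsHomogeneous.eval_smul {φ : MvPolynomial σ R} {d : ℕ} (hφ : φ.IsHomogeneous d)
    (t : R) (x : σ → R) : eval (t • x) φ = t ^ d * eval x φ := by
  induction hφ using IsWeightedHomogeneous.induction_on with
  | zero => simp
  | add p q _ _ hp hq => simp [hp, hq, mul_add]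
  | monomial s a hs =>
    simp only [← hs, eval_monomial, Pi.smul_apply, smul_eq_mul, mul_pow, Finsupp.weight_apply,
      Pi.one_apply, mul_one, Finsupp.prod, Finsupp.sum, Finset.prod_mul_distrib,
      Finset.prod_pow_eq_pow_sum]
    ring

theorem exists_polynomial_eval_eq_eval_smul (q : MvPolynomial σ R) (x : σ → R) :
    ∃ p : Polynomial R, (∀ t, p.eval t = eval (t • x) q) ∧
      ∀ d, p.coeff d = eval x (homogeneousComponent d q) := by
  classical
  refine ⟨∑ d ∈ Finset.range (q.totalDegree + 1),
    Polynomial.monomial d (eval x (homogeneousComponent d q)), fun t => ?_, fun d => ?_⟩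
  · conv_rhs => rw [← q.sum_homogeneousComponent]
    simp only [Polynomial.eval_finsetSum, Polynomial.eval_monomial, map_sum,
      (homogeneousComponent_isHomogeneous _ q).eval_smul, mul_comm]
  · simp only [Polynomial.finsetSum_coeff, Polynomial.coeff_monomial, Finset.sum_ite_eq',
      Finset.mem_range]
    split_ifs with hd
    · rfl
    · rw [homogeneousComponent_eq_zero _ _ (by omega), map_zero]

theorem monomial_mem_span_X_pow_degree (s : σ →₀ ℕ) (r : R) :
    monomial s r ∈ Ideal.span (Set.range X) ^ s.degree := by
  induction s using Finsupp.induction with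
  | zero => simp
  | single_add i k s _ _ ih =>
    rw [map_add, Finsupp.degree_single, monomial_single_add, pow_add]
    exact Ideal.mul_mem_mul (Ideal.pow_mem_pow (Ideal.subset_span (Set.mem_range_self i)) k) ih

theorem mem_span_X_pow_of_homogeneousComponent_eq_zero {q : MvPolynomial σ R} {N : ℕ}
    (hq : ∀ d < N, homogeneousComponent d q = 0) : q ∈ Ideal.span (Set.range X) ^ N := by
  rw [q.as_sum]
  refine Ideal.sum_mem _ fun s _ => ?_
  rcases lt_or_ge s.degree N with hs | hs
  · have hcoeff : coeff s q = 0 := by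
      simpa [hq _ hs] using (coeff_homogeneousComponent (n := s.degree) (φ := q) s).symm
    rw [hcoeff, map_zero]
    exact zero_mem _
  · exact Ideal.pow_le_pow_right hs (monomial_mem_span_X_pow_degree s _)

end MvPolynomial

theorem MultilinearMap.exists_mvPolynomial_eval_eq {R ι σ : Type*} [CommSemiring R]
    [Fintype ι] [Fintype σ] (c : MultilinearMap R (fun _ : ι => σ → R) R) :
    ∃ P : MvPolynomial σ R, ∀ y, MvPolynomial.eval y P = c fun _ => y := by
  classical
  refine ⟨∑ d : ι → σ, .C (c fun j => Pi.single (d j) 1) * ∏ j, .X (d j), fun y => ?_⟩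
  have hy : y = ∑ i, y i • (Pi.single i 1 : σ → R) := by
    ext j; simp [Pi.single_apply]
  conv_rhs => rw [hy, c.map_sum]
  simp [c.map_smul_univ, mul_comm]

namespace MvPolynomial

variable {σ 𝕜 : Type*} [Fintype σ] [NontriviallyNormedField 𝕜]

theorem homogeneousComponent_eq_zero_of_isBigO_pow {q : MvPolynomial σ 𝕜} {N : ℕ}
    (hq : (fun x => eval x q) =O[𝓝 0] fun x => ‖x‖ ^ N) {d : ℕ} (hd : d < N) :
    homogeneousComponent d q = 0 := by
  refine MvPolynomial.funext fun x => ?_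
  obtain ⟨p, hp_eval, hp_coeff⟩ := q.exists_polynomial_eval_eq_eval_smul x
  have hline : Tendsto (fun t : 𝕜 => t • x) (𝓝[≠] 0) (𝓝 0) :=
    tendsto_nhdsWithin_of_tendsto_nhds
      ((continuous_id.smul continuous_const).tendsto' 0 0 (by simp))
  have hp : (fun t => p.eval t) =O[𝓝[≠] 0] fun t => ‖t‖ ^ N := by
    simp only [hp_eval]
    refine (hq.comp_tendsto hline).trans (.of_bound (‖x‖ ^ N) (.of_forall fun t => ?_))
    simp [norm_smul, mul_pow, mul_comm]
  rw [← hp_coeff, map_zero]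
  exact Polynomial.X_pow_dvd_iff.1 (Polynomial.X_pow_dvd_of_isBigO_pow hp) d hd

theorem _root_.AnalyticAt.exists_mvPolynomial_isBigO_sub_eval {h : (σ → 𝕜) → 𝕜}
    (hh : AnalyticAt 𝕜 h 0) (N : ℕ) :
    ∃ P : MvPolynomial σ 𝕜, (fun y => h y - eval y P) =O[𝓝 0] fun y => ‖y‖ ^ N := by
  obtain ⟨p, hp⟩ := hh
  choose Q hQ using fun k => (p k).toMultilinearMap.exists_mvPolynomial_eval_eq
  refine ⟨∑ k ∈ Finset.range N, Q k, ?_⟩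
  simpa [FormalMultilinearSeries.partialSum, hQ] using hp.isBigO_sub_partialSum_pow N

theorem mem_span_sup_span_X_pow_of_eventuallyEq_sum_mul {ι : Type*} [Fintype ι]
    {f : MvPolynomial σ 𝕜} {g : ι → MvPolynomial σ 𝕜} {h : ι → (σ → 𝕜) → 𝕜}
    (hh : ∀ k, AnalyticAt 𝕜 (h k) 0)
    (hf : ∀ᶠ x in 𝓝 0, eval x f = ∑ k, h k x * eval x (g k)) (N : ℕ) :
    f ∈ Ideal.span (Set.range g) ⊔ Ideal.span (Set.range X) ^ N := by
  choose P hP using fun k => (hh k).exists_mvPolynomial_isBigO_sub_eval N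
  have hq : (fun x => eval x (f - ∑ k, P k * g k)) =O[𝓝 0] fun x => ‖x‖ ^ N := by
    refine IsBigO.congr' (f₁ := fun x => ∑ k, (h k x - eval x (P k)) * eval x (g k))
      (IsBigO.fun_sum fun k _ => by
        simpa using (hP k).mul (((g k).continuous_eval.tendsto 0).isBigO_one ℝ)) ?_ .rfl
    filter_upwards [hf] with x hx
    simp [hx, sub_mul]
  have hrem : f - ∑ k, P k * g k ∈ Ideal.span (Set.range X) ^ N :=
    mem_span_X_pow_of_homogeneousComponent_eq_zero fun _ hd =>
      homogeneousComponent_eq_zero_of_isBigO_pow hq hd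
  refine Submodule.mem_sup.2 ⟨_, Ideal.sum_mem _ fun k _ => ?_, _, hrem, add_sub_cancel _ _⟩
  exact Ideal.mul_mem_left _ _ (Ideal.subset_span (Set.mem_range_self k))

end MvPolynomial

theorem Ideal.mem_of_forall_mem_sup_pow {R : Type*} [CommRing R] [IsNoetherianRing R]
    {I J : Ideal R} [I.IsPrime] (hIJ : I ⊔ J ≠ ⊤) {f : R}
    (hf : ∀ N : ℕ, f ∈ I ⊔ J ^ N) : f ∈ I := by
  have hJ : J.map (Quotient.mk I) ≠ ⊤ := by
    intro htop
    apply hIJ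
    rw [sup_comm, ← mk_ker (I := I), RingHom.ker_eq_comap_bot,
      ← comap_map_of_surjective _ Quotient.mk_surjective, htop, comap_top]
  have hmem : Quotient.mk I f ∈ ⨅ N : ℕ, J.map (Quotient.mk I) ^ N := by
    refine mem_iInf.2 fun N => ?_
    have hfN := mem_map_of_mem (Quotient.mk I) (hf N)
    rwa [map_sup, map_quotient_self, bot_sup_eq, Ideal.map_pow] at hfN
  rwa [iInf_pow_eq_bot_of_isDomain _ hJ, mem_bot, Quotient.eq_zero_iff_mem] at hmem

/-- For a prime ideal `I ⊆ ℂ[z₁,…,zₙ]` whose zero set `X = V(I)` contains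
the origin, the natural map `ℂ[z₁,…,zₙ]/I → O_{ℂⁿ,o}/(I·O_{ℂⁿ,o})` is injective: if a
polynomial `f` can be written, on a neighborhood `U` of the origin, as a finite sum
`f = Σ h_k · g_k` with `g_k ∈ I` and `h_k` holomorphic (analytic) on `U`, then `f ∈ I`. -/
theorem polynomial_mem_prime_ideal_of_mem_germ_ideal {n : ℕ}
    (I : Ideal (MvPolynomial (Fin n) ℂ)) (hI : I.IsPrime)
    (horigin : ∀ g ∈ I, MvPolynomial.eval (0 : Fin n → ℂ) g = 0)
    (f : MvPolynomial (Fin n) ℂ)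
    (hf : ∃ (U : Set (Fin n → ℂ)) (_ : U ∈ nhds (0 : Fin n → ℂ)) (m : ℕ)
        (g : Fin m → MvPolynomial (Fin n) ℂ) (h : Fin m → (Fin n → ℂ) → ℂ),
      (∀ k, g k ∈ I) ∧
      (∀ k, ∀ x ∈ U, AnalyticAt ℂ (h k) x) ∧
      (∀ x ∈ U, MvPolynomial.eval x f = ∑ k, h k x * MvPolynomial.eval x (g k))) :
    f ∈ I := by
  obtain ⟨U, hU, m, g, h, hgI, hana, heq⟩ := hf
  have hspan : Ideal.span (Set.range g) ≤ I := Ideal.span_le.2 (Set.range_subset_iff.2 hgI)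
  have hmem (N : ℕ) : f ∈ I ⊔ Ideal.span (Set.range MvPolynomial.X) ^ N :=
    sup_le_sup_right hspan _ <| MvPolynomial.mem_span_sup_span_X_pow_of_eventuallyEq_sum_mul
      (fun k => hana k 0 (mem_of_mem_nhds hU)) (eventually_of_mem hU heq) N
  have hproper : I ⊔ Ideal.span (Set.range MvPolynomial.X) ≠ ⊤ := by
    refine ne_top_of_le_ne_top (RingHom.ker_ne_top (MvPolynomial.eval 0)) (sup_le horigin ?_)
    exact Ideal.span_le.2 (Set.range_subset_iff.2 fun i => by simp)
  exact Ideal.mem_of_forall_mem_sup_pow hproper hmem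
end

section
/- Let {ν_j} be a sequence of valuations on a Noetherian local ring R (each ν_j : R \ {0} → ℝ≥0 satisfying ν_j(fg) = ν_j(f)+ν_j(g), ν_j(f+g) ≥ min(ν_j(f),ν_j(g)), ν_j(u)=0 for units u). Assume sup_j ν_j(g) < +∞ for every nonzero g ∈ R. Then there exists a subsequence {ν_{j_l}} such that for every nonzero f ∈ R the limit ν₀(f) := lim_l ν_{j_l}(f) exists, and ν₀ is a valuation on R. -/
/-!
For a rational `q`, the elements of value at least `q` under `ν_j` form an ideal `I_q^j`.
By Noetherianity, any infinite set of indices contains an infinite subset `T` on which the ideal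
of elements lying in `I_q^j` for all but finitely many `j ∈ T` is maximal; then every element lies
in `I_q^j` either for almost all or for almost no `j ∈ T`. A diagonal extraction over the countably
many `q` gives a subsequence along which no `ν_j(f)` can oscillate across a rational, so it
converges, and the valuation axioms pass to the limit.
-/

open Filter Set Topology

theorem tendsto_liminf_of_forall_rat_eventuallyConst_le {ι : Type*} {l : Filter ι} [l.NeBot]
    {u : ι → ℝ}
    (h : ∀ q : ℚ, EventuallyConst (fun i => (q : ℝ) ≤ u i) l)
    (hbdd_above : IsBoundedUnder (· ≤ ·) l u) (hbdd_below : IsBoundedUnder (· ≥ ·) l u) :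
    Tendsto u l (𝓝 (liminf u l)) := by
  refine tendsto_of_le_liminf_of_limsup_le le_rfl ?_ hbdd_above hbdd_below
  by_contra! hlt
  obtain ⟨q, hliminf, hlimsup⟩ := exists_rat_btwn hlt
  have hbelow : ∃ᶠ i in l, u i < q :=
    frequently_lt_of_liminf_lt hbdd_above.isCoboundedUnder_ge hliminf
  have habove : ∃ᶠ i in l, (q : ℝ) < u i :=
    frequently_lt_of_lt_limsup hbdd_below.isCoboundedUnder_le hlimsup
  rcases eventuallyConst_pred.mp (h q) with hge | hnge
  · exact hbelow (hge.mono fun _ => not_lt.2)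
  · exact habove (hnge.mono fun _ hi hi' => hi hi'.le)

theorem exists_strictMono_eventually_mem_diagonal {p : ℕ → Set ℕ → Prop}
    (h : ∀ n T, T.Infinite → ∃ T' ⊆ T, T'.Infinite ∧ p n T') :
    ∃ φ : ℕ → ℕ, StrictMono φ ∧ ∀ n, ∃ T, p n T ∧ ∀ᶠ j in atTop, φ j ∈ T := by
  choose F hF_sub hF_inf hF_p using h
  let S : ℕ → {T : Set ℕ // T.Infinite} := fun n =>
    Nat.rec ⟨univ, infinite_univ⟩ (fun n T => ⟨F n T.1 T.2, hF_inf _ _ _⟩) n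
  have hS : Antitone fun n => (S n).1 := antitone_nat_of_succ_le fun n => hF_sub _ _ _
  obtain ⟨φ, hφ, hφS⟩ := extraction_forall_of_frequently fun n =>
    Nat.frequently_atTop_iff_infinite.2 (S n).2
  exact ⟨φ, hφ, fun n => ⟨(S (n + 1)).1, hF_p _ _ _,
    eventually_atTop.2 ⟨n + 1, fun j hj => hS hj (hφS j)⟩⟩⟩

section Ideals

variable {R ι : Type*} [CommRing R]

def liminfIdeal (l : Filter ι) (I : ι → Ideal R) : Ideal R where
  carrier := {f | ∀ᶠ j in l, f ∈ I j}
  zero_mem' := Eventually.of_forall fun j => (I j).zero_mem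
  add_mem' ha hb := (ha.and hb).mono fun j h => (I j).add_mem h.1 h.2
  smul_mem' c _ hf := hf.mono fun j h => (I j).smul_mem c h

theorem liminfIdeal_anti {l l' : Filter ι} (h : l' ≤ l) (I : ι → Ideal R) :
    liminfIdeal l I ≤ liminfIdeal l' I := fun _ hf => h hf

theorem exists_infinite_subset_eventuallyConst_mem [IsNoetherianRing R] (I : ℕ → Ideal R)
    {T : Set ℕ} (hT : T.Infinite) :
    ∃ T' ⊆ T, T'.Infinite ∧ ∀ f, EventuallyConst (fun j => f ∈ I j) (atTop ⊓ 𝓟 T') := by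
  obtain ⟨_, ⟨T', ⟨hT'T, hT'⟩, rfl⟩, hmax⟩ := set_has_maximal_iff_noetherian.mpr
    (inferInstance : IsNoetherian R R)
    ((fun U => liminfIdeal (atTop ⊓ 𝓟 U) I) '' {U | U ⊆ T ∧ U.Infinite})
    ⟨_, mem_image_of_mem _ ⟨subset_rfl, hT⟩⟩
  refine ⟨T', hT'T, hT', fun f => eventuallyConst_pred.2 (or_iff_not_imp_right.2 fun hfreq => ?_)⟩
  -- Restricting to the indices where `f ∈ I j` cannot enlarge the maximal ideal.
  set U := T' ∩ {j | f ∈ I j}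
  have hU : U.Infinite :=
    Nat.frequently_atTop_iff_infinite.1 (frequently_inf_principal.1 hfreq)
  have hle : liminfIdeal (atTop ⊓ 𝓟 T') I ≤ liminfIdeal (atTop ⊓ 𝓟 U) I :=
    liminfIdeal_anti (inf_le_inf_left _ (principal_mono.2 inter_subset_left)) I
  have hfU : f ∈ liminfIdeal (atTop ⊓ 𝓟 U) I :=
    eventually_inf_principal.2 (Eventually.of_forall fun _ hj => hj.2)
  rwa [← eq_of_le_of_not_lt hle (hmax _ ⟨U, ⟨inter_subset_left.trans hT'T, hU⟩, rfl⟩)] at hfU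

theorem exists_strictMono_forall_eventuallyConst_mem [IsNoetherianRing R]
    (I : ℕ → ℕ → Ideal R) :
    ∃ φ : ℕ → ℕ, StrictMono φ ∧ ∀ n f, EventuallyConst (fun j => f ∈ I n (φ j)) atTop := by
  obtain ⟨φ, hφ, hT⟩ := exists_strictMono_eventually_mem_diagonal fun n _ hT =>
    exists_infinite_subset_eventuallyConst_mem (I n) hT
  refine ⟨φ, hφ, fun n f => ?_⟩
  obtain ⟨T, hconst, hφT⟩ := hT n
  exact (hconst f).comp_tendsto (tendsto_inf.2 ⟨hφ.tendsto_atTop, tendsto_principal.2 hφT⟩)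

end Ideals

structure IsRealValuation {R : Type*} [CommRing R] (w : R → ℝ) : Prop where
  nonneg : ∀ f, f ≠ 0 → 0 ≤ w f
  map_mul : ∀ f g, f ≠ 0 → g ≠ 0 → w (f * g) = w f + w g
  min_le_map_add : ∀ f g, f ≠ 0 → g ≠ 0 → f + g ≠ 0 → min (w f) (w g) ≤ w (f + g)

namespace IsRealValuation

variable {R : Type*} [CommRing R] {w : R → ℝ}

def superlevelIdeal (hw : IsRealValuation w) (q : ℝ) : Ideal R where
  carrier := {f | f = 0 ∨ q ≤ w f}
  zero_mem' := Or.inl rfl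
  add_mem' {f g} hf hg := by
    by_cases hf0 : f = 0
    · simpa [hf0] using hg
    by_cases hg0 : g = 0
    · simpa [hg0] using hf
    by_cases hfg : f + g = 0
    · exact Or.inl hfg
    exact Or.inr <| (le_min (hf.resolve_left hf0) (hg.resolve_left hg0)).trans
      (hw.min_le_map_add f g hf0 hg0 hfg)
  smul_mem' c f hf := by
    by_cases hc : c = 0
    · simp [hc]
    by_cases hf0 : f = 0
    · simp [hf0]
    refine Or.inr ?_
    rw [smul_eq_mul, hw.map_mul c f hc hf0]
    linarith [hw.nonneg c hc, hf.resolve_left hf0]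

theorem mem_superlevelIdeal (hw : IsRealValuation w) {q : ℝ} {f : R} (hf : f ≠ 0) :
    f ∈ hw.superlevelIdeal q ↔ q ≤ w f := or_iff_right hf

theorem of_tendsto [NoZeroDivisors R] {ι : Type*} {l : Filter ι} [l.NeBot] {v : ι → R → ℝ}
    (hv : ∀ i, IsRealValuation (v i))
    (hlim : ∀ f, f ≠ 0 → Tendsto (fun i => v i f) l (𝓝 (w f))) : IsRealValuation w where
  nonneg f hf := ge_of_tendsto' (hlim f hf) fun i => (hv i).nonneg f hf
  map_mul f g hf hg := tendsto_nhds_unique (hlim _ (mul_ne_zero hf hg)) <|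
    ((hlim f hf).add (hlim g hg)).congr fun i => ((hv i).map_mul f g hf hg).symm
  min_le_map_add f g hf hg hfg := le_of_tendsto_of_tendsto' ((hlim f hf).min (hlim g hg))
    (hlim _ hfg) fun i => (hv i).min_le_map_add f g hf hg hfg

theorem exists_strictMono_tendsto [IsNoetherianRing R] {ν : ℕ → R → ℝ}
    (hν : ∀ j, IsRealValuation (ν j)) (hbdd : ∀ f : R, f ≠ 0 → ∃ C : ℝ, ∀ j, ν j f ≤ C) :
    ∃ φ : ℕ → ℕ, StrictMono φ ∧ ∀ f, f ≠ 0 →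
      Tendsto (fun l => ν (φ l) f) atTop (𝓝 (liminf (fun l => ν (φ l) f) atTop)) := by
  obtain ⟨e, he⟩ := exists_surjective_nat ℚ
  obtain ⟨φ, hφ, hconst⟩ := exists_strictMono_forall_eventuallyConst_mem fun n j =>
    (hν j).superlevelIdeal (e n)
  refine ⟨φ, hφ, fun f hf => tendsto_liminf_of_forall_rat_eventuallyConst_le (fun q => ?_) ?_ ?_⟩
  · obtain ⟨n, rfl⟩ := he q
    simpa only [(hν _).mem_superlevelIdeal hf] using hconst n f
  · obtain ⟨C, hC⟩ := hbdd f hf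
    exact isBoundedUnder_of ⟨C, fun l => hC _⟩
  · exact isBoundedUnder_of ⟨0, fun l => (hν _).nonneg f hf⟩

end IsRealValuation

theorem exists_convergent_subsequence_of_valuations_general {R : Type*} [CommRing R]
    [IsDomain R] [IsNoetherianRing R]
    (ν : ℕ → R → ℝ)
    (hnonneg : ∀ j, ∀ f : R, f ≠ 0 → 0 ≤ ν j f)
    (hmul : ∀ j, ∀ f g : R, f ≠ 0 → g ≠ 0 → ν j (f * g) = ν j f + ν j g)
    (hadd : ∀ j, ∀ f g : R, f ≠ 0 → g ≠ 0 → f + g ≠ 0 →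
      min (ν j f) (ν j g) ≤ ν j (f + g))
    (hunit : ∀ j, ∀ u : R, IsUnit u → ν j u = 0)
    (hbdd : ∀ g : R, g ≠ 0 → ∃ C : ℝ, ∀ j, ν j g ≤ C) :
    ∃ (φ : ℕ → ℕ), StrictMono φ ∧ ∃ ν₀ : R → ℝ,
      (∀ f : R, f ≠ 0 → Tendsto (fun l => ν (φ l) f) atTop (nhds (ν₀ f))) ∧
      (∀ f : R, f ≠ 0 → 0 ≤ ν₀ f) ∧
      (∀ f g : R, f ≠ 0 → g ≠ 0 → ν₀ (f * g) = ν₀ f + ν₀ g) ∧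
      (∀ f g : R, f ≠ 0 → g ≠ 0 → f + g ≠ 0 → min (ν₀ f) (ν₀ g) ≤ ν₀ (f + g)) ∧
      (∀ u : R, IsUnit u → ν₀ u = 0) := by
  have hν : ∀ j, IsRealValuation (ν j) := fun j => ⟨hnonneg j, hmul j, hadd j⟩
  obtain ⟨φ, hφ, hlim⟩ := IsRealValuation.exists_strictMono_tendsto hν hbdd
  let ν₀ : R → ℝ := fun f => liminf (fun l => ν (φ l) f) atTop
  have hν₀ : IsRealValuation ν₀ := IsRealValuation.of_tendsto (fun l => hν (φ l)) hlim
  refine ⟨φ, hφ, ν₀, hlim, hν₀.nonneg, hν₀.map_mul, hν₀.min_le_map_add, fun u hu => ?_⟩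
  simp only [ν₀, hunit _ u hu, liminf_const]

/-- Let `{ν_j}` be a sequence of valuations on a Noetherian local
domain `R`, uniformly bounded at every nonzero element. Then some subsequence
`{ν_{j_l}}` converges pointwise (on nonzero elements) to a limit `ν₀`, which is
again a valuation on `R`. -/
theorem exists_convergent_subsequence_of_valuations {R : Type*} [CommRing R]
    [IsDomain R] [IsNoetherianRing R] [IsLocalRing R]
    (ν : ℕ → R → ℝ)
    (hnonneg : ∀ j, ∀ f : R, f ≠ 0 → 0 ≤ ν j f)
    (hmul : ∀ j, ∀ f g : R, f ≠ 0 → g ≠ 0 → ν j (f * g) = ν j f + ν j g)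
    (hadd : ∀ j, ∀ f g : R, f ≠ 0 → g ≠ 0 → f + g ≠ 0 →
      min (ν j f) (ν j g) ≤ ν j (f + g))
    (hunit : ∀ j, ∀ u : R, IsUnit u → ν j u = 0)
    (hbdd : ∀ g : R, g ≠ 0 → ∃ C : ℝ, ∀ j, ν j g ≤ C) :
    ∃ (φ : ℕ → ℕ), StrictMono φ ∧ ∃ ν₀ : R → ℝ,
      (∀ f : R, f ≠ 0 → Tendsto (fun l => ν (φ l) f) atTop (nhds (ν₀ f))) ∧
      (∀ f : R, f ≠ 0 → 0 ≤ ν₀ f) ∧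
      (∀ f g : R, f ≠ 0 → g ≠ 0 → ν₀ (f * g) = ν₀ f + ν₀ g) ∧
      (∀ f g : R, f ≠ 0 → g ≠ 0 → f + g ≠ 0 → min (ν₀ f) (ν₀ g) ≤ ν₀ (f + g)) ∧
      (∀ u : R, IsUnit u → ν₀ u = 0) :=
  exists_convergent_subsequence_of_valuations_general ν hnonneg hmul hadd hunit hbdd
end
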